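/- (Equilateral projective triangles) Suppose U, V, W are nonzero vectors with a_U, a_V, a_W all nonzero, with all three quantities a_U·a_V − b_{UV}², a_U·a_W − b_{UW}², a_V·a_W − b_{VW}² nonzero, whose projective triangle is equilateral with common nonzero projective quadrance q_u = q_v = q_w = q and common projective spread S_u = S_v = S_w = S, and suppose 1 − S·q ≠ 0. Then (1 − S·q)² = 4(1 − S)(1 − q). -/

import Mathlib

/-- The projective quadrance between the projective points `[U]` and `[V]`. -/
def projQuadrance {F : Type*} [Field F] {M : Type*} [AddCommGroup M] [Module F M]
    (B : LinearMap.BilinForm F M) (U V : M) : F :=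
  1 - (B U V) ^ 2 / (B U U * B V V)

/-- The projective spread between the projective lines `WU` and `WV`
(the spread at the vertex `[W]`). -/
def projSpread {F : Type*} [Field F] {M : Type*} [AddCommGroup M] [Module F M]
    (B : LinearMap.BilinForm F M) (W U V : M) : F :=
  1 - (B W W * B U V - B U W * B V W) ^ 2 /
      ((B U U * B W W - (B U W) ^ 2) * (B V V * B W W - (B V W) ^ 2))

/-!
Writing `a, b, c` for the norms `B U U, B V V, B W W` and `x, y, z` for `B U V, B U W, B V W`,
the quadrances give `x² = ab(1 - q_w)`, `y² = ac(1 - q_v)`, `z² = bc(1 - q_u)`, and the spread at `W`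
gives `(cx - yz)² = (1 - S_w) · ac q_v · bc q_u`. Expanding the square isolates the mixed term
`2xyz = abc (2 - q_u - q_v - q_w + q_u q_v S_w)`, and squaring once more gives the projective
cross law `(q_u q_v S_w - q_u - q_v - q_w + 2)² = 4 (1 - q_u)(1 - q_v)(1 - q_w)`. For an equilateral
triangle its two sides differ from those of the claimed identity by the factor `q²`.
-/

section ProjectiveTrigonometry

variable {F : Type*} [Field F] {M : Type*} [AddCommGroup M] [Module F M]
  (B : LinearMap.BilinForm F M) {U V W : M}

theorem mul_projQuadrance (h : B U U * B V V ≠ 0) :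
    B U U * B V V * projQuadrance B U V = B U U * B V V - B U V ^ 2 := by
  rw [projQuadrance, mul_sub, mul_one, mul_div_cancel₀ _ h]

theorem one_sub_projSpread_mul
    (h : (B U U * B W W - B U W ^ 2) * (B V V * B W W - B V W ^ 2) ≠ 0) :
    (1 - projSpread B W U V) * ((B U U * B W W - B U W ^ 2) * (B V V * B W W - B V W ^ 2)) =
      (B W W * B U V - B U W * B V W) ^ 2 := by
  rw [projSpread, sub_sub_cancel, div_mul_cancel₀ _ h]

theorem two_mul_mixed_eq_of_projSpread
    (haU : B U U ≠ 0) (haV : B V V ≠ 0) (haW : B W W ≠ 0)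
    (hqu : projQuadrance B V W ≠ 0) (hqv : projQuadrance B U W ≠ 0) :
    2 * (B U V * B U W * B V W) = B U U * B V V * B W W *
      (projQuadrance B V W * projQuadrance B U W * projSpread B W U V -
        projQuadrance B V W - projQuadrance B U W - projQuadrance B U V + 2) := by
  have hx := mul_projQuadrance B (mul_ne_zero haU haV)
  have hy := mul_projQuadrance B (mul_ne_zero haU haW)
  have hz := mul_projQuadrance B (mul_ne_zero haV haW)
  have hden : (B U U * B W W - B U W ^ 2) * (B V V * B W W - B V W ^ 2) ≠ 0 := by
    rw [← hy, ← hz]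
    exact mul_ne_zero (mul_ne_zero (mul_ne_zero haU haW) hqv) (mul_ne_zero (mul_ne_zero haV haW) hqu)
  have hspread := one_sub_projSpread_mul B hden
  rw [← hy, ← hz] at hspread
  refine mul_left_cancel₀ haW ?_
  linear_combination hspread + B W W ^ 2 * hx + B V W ^ 2 * hy
    + B U U * B W W * (1 - projQuadrance B U W) * hz

theorem projective_cross_law
    (haU : B U U ≠ 0) (haV : B V V ≠ 0) (haW : B W W ≠ 0)
    (hqu : projQuadrance B V W ≠ 0) (hqv : projQuadrance B U W ≠ 0) :
    (projQuadrance B V W * projQuadrance B U W * projSpread B W U V -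
        projQuadrance B V W - projQuadrance B U W - projQuadrance B U V + 2) ^ 2 =
      4 * (1 - projQuadrance B V W) * (1 - projQuadrance B U W) * (1 - projQuadrance B U V) := by
  have hx := mul_projQuadrance B (mul_ne_zero haU haV)
  have hy := mul_projQuadrance B (mul_ne_zero haU haW)
  have hz := mul_projQuadrance B (mul_ne_zero haV haW)
  have hprod : (B U V * B U W * B V W) ^ 2 = (B U U * B V V * B W W) ^ 2 *
      ((1 - projQuadrance B V W) * (1 - projQuadrance B U W) * (1 - projQuadrance B U V)) := by
    linear_combination B U W ^ 2 * B V W ^ 2 * hx + B U U * B V V * (1 - projQuadrance B U V) *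
      (B V W ^ 2 * hy + B U U * B W W * (1 - projQuadrance B U W) * hz)
  refine mul_left_cancel₀ (pow_ne_zero 2 (mul_ne_zero (mul_ne_zero haU haV) haW)) ?_
  rw [← mul_pow, ← two_mul_mixed_eq_of_projSpread B haU haV haW hqu hqv]
  linear_combination 4 * hprod

end ProjectiveTrigonometry

theorem equilateral_projective_triangle_general
    {F : Type*} [Field F]
    {M : Type*} [AddCommGroup M] [Module F M]
    (B : LinearMap.BilinForm F M)
    (U V W : M)
    (haU : B U U ≠ 0) (haV : B V V ≠ 0) (haW : B W W ≠ 0)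
    (q S : F)
    (hqu : projQuadrance B V W = q) (hqv : projQuadrance B U W = q)
    (hqw : projQuadrance B U V = q) (hq : q ≠ 0)
    (hSw : projSpread B W U V = S) :
    (1 - S * q) ^ 2 = 4 * (1 - S) * (1 - q) := by
  have hcross := projective_cross_law B haU haV haW (hqu ▸ hq) (hqv ▸ hq)
  rw [hqu, hqv, hqw, hSw] at hcross
  refine mul_left_cancel₀ (pow_ne_zero 2 hq) ?_
  linear_combination hcross

theorem equilateral_projective_triangle
    {F : Type*} [Field F] (hchar : (2 : F) ≠ 0)
    {M : Type*} [AddCommGroup M] [Module F M]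
    (B : LinearMap.BilinForm F M) (hsym : ∀ x y : M, B x y = B y x)
    (U V W : M) (hU : U ≠ 0) (hV : V ≠ 0) (hW : W ≠ 0)
    (haU : B U U ≠ 0) (haV : B V V ≠ 0) (haW : B W W ≠ 0)
    (hdUV : B U U * B V V - (B U V) ^ 2 ≠ 0)
    (hdUW : B U U * B W W - (B U W) ^ 2 ≠ 0)
    (hdVW : B V V * B W W - (B V W) ^ 2 ≠ 0)
    (q S : F)
    (hqu : projQuadrance B V W = q) (hqv : projQuadrance B U W = q)
    (hqw : projQuadrance B U V = q) (hq : q ≠ 0)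
    (hSu : projSpread B U V W = S) (hSv : projSpread B V U W = S)
    (hSw : projSpread B W U V = S)
    (hSq : 1 - S * q ≠ 0) :
    (1 - S * q) ^ 2 = 4 * (1 - S) * (1 - q) :=
  equilateral_projective_triangle_general B U V W haU haV haW q S hqu hqv hqw hq hSw
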